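/- arXiv:2602.23395 — 10 statements merged into one kernel-verified Lean document; each statement's English description precedes it below -/
import Mathlib

section
/- Let a : ℕ → {0,1} be balanced (i.e., a(2n) + a(2n+1) = 1 for all n) and satisfy a(2n) = a(n + a(n)) for all n ≥ 0. Then a(0) = 0, and for all n ≥ 2, a(2n) = 0 and a(2n+1) = 1. In particular a is ultimately periodic with period 2. -/
/-- If `a : ℕ → {0,1}` is balanced and `a(2n) = a(n + a(n))` for all `n`,
then `a(0) = 0` and for all `n ≥ 2`, `a(2n) = 0` and `a(2n+1) = 1`;
in particular `a` is ultimately periodic with period 2. -/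
theorem dyadic_rigidity_a (a : ℕ → ℕ) (hrange : ∀ n, a n ≤ 1)
    (hbal : ∀ n, a (2 * n) + a (2 * n + 1) = 1)
    (hrec : ∀ n, a (2 * n) = a (n + a n)) :
    a 0 = 0 ∧ (∀ n, 2 ≤ n → a (2 * n) = 0 ∧ a (2 * n + 1) = 1) ∧
      ∃ N, ∀ n, N ≤ n → a (n + 2) = a n := by
  have h0 : a 0 = 0 := by
    rcases Nat.le_one_iff_eq_zero_or_eq_one.mp (hrange 0) with h | h
    · exact h
    · exfalso
      have h1 := hrec 0
      have h2 := hbal 0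
      norm_num [h] at h1 h2
      omega
  have h4 : a 4 = 0 := by
    have h1 := hrec 2
    have h2 := hbal 1
    norm_num at h1 h2
    rcases Nat.le_one_iff_eq_zero_or_eq_one.mp (hrange 2) with h | h
    · rw [h] at h1; simpa [h] using h1
    · have h3 : a 3 = 0 := by omega
      rw [h] at h1; simpa [h3] using h1
  have h6 : a 6 = 0 := by
    have h1 := hrec 3
    have h2 := hbal 1
    norm_num at h1 h2
    rcases Nat.le_one_iff_eq_zero_or_eq_one.mp (hrange 2) with h | h
    · have h3 : a 3 = 1 := by omega
      rw [h3] at h1; simpa [h4] using h1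
    · have h3 : a 3 = 0 := by omega
      rw [h3] at h1; simpa [h3] using h1
  have key : ∀ n, 2 ≤ n → a (2 * n) = 0 := by
    intro n
    induction n using Nat.strong_induction_on with
    | _ n ih =>
      intro hn
      rcases Nat.even_or_odd n with ⟨m, hm⟩ | ⟨m, hm⟩
      · -- n = 2m
        have hm2 : n = 2 * m := by omega
        rcases eq_or_lt_of_le (show 1 ≤ m by omega) with h | h
        · -- m = 1, n = 2
          have : n = 2 := by omega
          subst this; simpa using h4
        · -- m ≥ 2
          have ham : a n = 0 := by rw [hm2]; exact ih m (by omega) (by omega)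
          have h1 := hrec n
          rw [ham] at h1
          simpa [ham] using h1
      · -- n = 2m + 1
        rcases eq_or_lt_of_le (show 1 ≤ m by omega) with h | h
        · -- m = 1, n = 3
          have : n = 3 := by omega
          subst this; simpa using h6
        · -- m ≥ 2
          have ham0 : a (2 * m) = 0 := ih m (by omega) (by omega)
          have hb := hbal m
          have ham : a n = 1 := by
            have : n = 2 * m + 1 := by omega
            rw [this]; omega
          have h1 := hrec n
          rw [ham] at h1
          have hnn : n + 1 = 2 * (m + 1) := by omega
          rw [hnn] at h1
          rw [h1]
          exact ih (m + 1) (by omega) (by omega)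
  refine ⟨h0, fun n hn => ⟨key n hn, by have := hbal n; have := key n hn; omega⟩, 4, ?_⟩
  intro n hn
  rcases Nat.even_or_odd n with ⟨m, hm⟩ | ⟨m, hm⟩
  · have hm2 : n = 2 * m := by omega
    have e1 : n + 2 = 2 * (m + 1) := by omega
    have e2 : 2 * m + 2 = 2 * (m + 1) := by ring
    rw [hm2, e2, key m (by omega), key (m + 1) (by omega)]
  · have hm2 : n = 2 * m + 1 := by omega
    have e1 : n + 2 = 2 * (m + 1) + 1 := by omega
    have o1 : a (2 * m + 1) = 1 := by
      have := hbal m; have := key m (by omega); omega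
    have o2 : a (2 * (m + 1) + 1) = 1 := by
      have := hbal (m + 1); have := key (m + 1) (by omega); omega
    have e2 : 2 * m + 1 + 2 = 2 * (m + 1) + 1 := by ring
    rw [hm2, e2, o1, o2]
end

section
/- Let a : ℕ → {0,1} be balanced and satisfy a(2n) = a(n + 1 - a(n)) for all n ≥ 0. Then a(0) = 1, and for all n ≥ 2, a(2n) = 1 and a(2n+1) = 0. In particular a is ultimately periodic with period 2. -/
/-- If `a : ℕ → {0,1}` is balanced and `a(2n) = a(n + 1 - a(n))` for all `n`,
then `a(0) = 1` and for all `n ≥ 2`, `a(2n) = 1` and `a(2n+1) = 0`;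
in particular `a` is ultimately periodic with period 2. -/
theorem dyadic_rigidity_b (a : ℕ → ℕ) (hrange : ∀ n, a n ≤ 1)
    (hbal : ∀ n, a (2 * n) + a (2 * n + 1) = 1)
    (hrec : ∀ n, a (2 * n) = a (n + 1 - a n)) :
    a 0 = 1 ∧ (∀ n, 2 ≤ n → a (2 * n) = 1 ∧ a (2 * n + 1) = 0) ∧
      ∃ N, ∀ n, N ≤ n → a (n + 2) = a n := by
  have h0 : a 0 = 1 := by
    have h := hrec 0
    have hb := hbal 0
    norm_num at h hb
    rcases Nat.le_one_iff_eq_zero_or_eq_one.mp (hrange 0) with hc | hc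
    · rw [hc] at h; norm_num at h; omega
    · exact hc
  have h4 : a (2 * 2) = 1 := by
    have h2 := hrec 2
    have hb1 := hbal 1
    norm_num at h2 hb1 ⊢
    rcases Nat.le_one_iff_eq_zero_or_eq_one.mp (hrange 2) with hc | hc
    · rw [hc] at h2; norm_num at h2; omega
    · rw [hc] at h2; norm_num at h2; omega
  have h6 : a (2 * 3) = 1 := by
    have h3 := hrec 3
    have hb1 := hbal 1
    norm_num at h3 hb1 h4 ⊢
    rcases Nat.le_one_iff_eq_zero_or_eq_one.mp (hrange 3) with hc | hc
    · rw [hc] at h3; norm_num at h3; omega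
    · rw [hc] at h3; norm_num at h3; omega
  have key : ∀ n, 2 ≤ n → a (2 * n) = 1 := by
    intro n
    induction n using Nat.strong_induction_on with
    | _ n ih =>
      intro hn
      rcases Nat.lt_or_ge n 4 with h | h
      · interval_cases n
        · exact h4
        · exact h6
      · rcases Nat.even_or_odd n with ⟨k, hk⟩ | ⟨k, hk⟩
        · have hk2 : 2 ≤ k := by omega
          have han : a n = 1 := by
            have := ih k (by omega) hk2
            rwa [show n = 2 * k by omega]
          simpa [han] using hrec n
        · have hk2 : 2 ≤ k := by omega
          have hak : a (2 * k) = 1 := ih k (by omega) hk2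
          have hb := hbal k
          have han : a n = 0 := by
            rw [show n = 2 * k + 1 by omega]; omega
          have h1 : a (n + 1) = 1 := by
            have := ih (k + 1) (by omega) (by omega)
            rwa [show n + 1 = 2 * (k + 1) by omega]
          have hr := hrec n
          simp [han] at hr
          omega
  refine ⟨h0, fun n hn => ⟨key n hn, by have h1 := key n hn; have h2 := hbal n; omega⟩,
    4, fun n hn => ?_⟩
  rcases Nat.even_or_odd n with ⟨k, hk⟩ | ⟨k, hk⟩
  · have e1 := key k (by omega)
    have e2 := key (k + 1) (by omega)
    rw [show n + 2 = 2 * (k + 1) by omega, show n = 2 * k by omega]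
    omega
  · have e1 := hbal k
    have e2 := hbal (k + 1)
    have f1 := key k (by omega)
    have f2 := key (k + 1) (by omega)
    rw [show n + 2 = 2 * (k + 1) + 1 by omega, show n = 2 * k + 1 by omega]
    omega
end

section
/- The Quarto sequence Q satisfies Q(n) = t(n) XOR d(n) for all n ≥ 0, where t is the Thue–Morse sequence, d(0) = 0, and d(n) = ⌊log₂ n⌋ mod 2 for n ≥ 1. -/
lemma log2_double (k : ℕ) (hk : 1 ≤ k) : Nat.log 2 (2 * k) = Nat.log 2 k + 1 := by
  rw [mul_comm]
  exact Nat.log_mul_base one_lt_two (by omega)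

lemma log2_odd (k : ℕ) (hk : 1 ≤ k) : Nat.log 2 (2 * k + 1) = Nat.log 2 k + 1 := by
  have h1 : 0 < Nat.log 2 (2 * k + 1) := Nat.log_pos one_lt_two (by omega)
  have h2 := Nat.log_div_base 2 (2 * k + 1)
  have h3 : (2 * k + 1) / 2 = k := by omega
  rw [h3] at h2
  omega

/-- The Quarto sequence `Q` satisfies `Q(n) = t(n) XOR d(n)` where `t` is
the Thue–Morse sequence and `d(0) = 0`, `d(n) = ⌊log₂ n⌋ mod 2` for `n ≥ 1`. -/
theorem quarto_rep (t Q : ℕ → ℕ)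
    (htr : ∀ n, t n ≤ 1) (hQr : ∀ n, Q n ≤ 1)
    (ht0 : t 0 = 0) (hte : ∀ n, t (2 * n) = t n) (hto : ∀ n, t (2 * n + 1) = 1 - t n)
    (hQ0 : Q 0 = 0) (hQ1 : Q 1 = 1)
    (hQ4 : ∀ n, 1 ≤ n → Q (4 * n) = Q n)
    (hQ4' : ∀ n, 1 ≤ n → Q (4 * n + 1) = 1 - Q n)
    (hQ2 : ∀ n, Q (4 * n + 2) = Q (2 * n))
    (hQ3 : ∀ n, Q (4 * n + 3) = 1 - Q (2 * n)) :
    ∀ n, Q n = (t n + (if n = 0 then 0 else Nat.log 2 n % 2)) % 2 := by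
  have ht1 : t 1 = 1 := by have := hto 0; simp [ht0] at this; omega
  intro n
  induction n using Nat.strong_induction_on with
  | _ n ih =>
    rcases (by omega : n = 0 ∨ n = 1 ∨ 2 ≤ n) with rfl | rfl | hn
    · simp [hQ0, ht0]
    · simp [hQ1, ht1]
    obtain ⟨m, rfl | rfl | rfl | rfl⟩ :
        ∃ m, n = 4 * m ∨ n = 4 * m + 1 ∨ n = 4 * m + 2 ∨ n = 4 * m + 3 :=
      ⟨n / 4, by omega⟩
    · -- n = 4m, m ≥ 1
      have hm1 : 1 ≤ m := by omega
      have htn : t (4 * m) = t m := by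
        rw [show 4 * m = 2 * (2 * m) by ring, hte, hte]
      have hlog : Nat.log 2 (4 * m) = Nat.log 2 m + 2 := by
        rw [show 4 * m = 2 * (2 * m) by ring,
          log2_double _ (by omega), log2_double _ hm1]
      have hih := ih m (by omega)
      rw [if_neg (by omega : m ≠ 0)] at hih
      rw [if_neg (by omega : 4 * m ≠ 0), hQ4 m hm1, htn, hlog, hih]
      omega
    · -- n = 4m + 1, m ≥ 1
      have hm1 : 1 ≤ m := by omega
      have htn : t (4 * m + 1) = 1 - t m := by
        rw [show 4 * m + 1 = 2 * (2 * m) + 1 by ring, hto, hte]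
      have hlog : Nat.log 2 (4 * m + 1) = Nat.log 2 m + 2 := by
        rw [show 4 * m + 1 = 2 * (2 * m) + 1 by ring,
          log2_odd _ (by omega), log2_double _ hm1]
      have hih := ih m (by omega)
      rw [if_neg (by omega : m ≠ 0)] at hih
      rw [if_neg (by omega : 4 * m + 1 ≠ 0), hQ4' m hm1, htn, hlog]
      have h1 := htr m
      have h2 := hQr m
      omega
    · -- n = 4m + 2
      have htn : t (4 * m + 2) = 1 - t m := by
        rw [show 4 * m + 2 = 2 * (2 * m + 1) by ring, hte, hto]
      rcases Nat.eq_zero_or_pos m with rfl | hm1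
      · norm_num [hQ2 0, hQ0, htn, ht0, show Nat.log 2 2 = 1 from by have := log2_double 1 le_rfl; simpa using this]
      · have hlog : Nat.log 2 (4 * m + 2) = Nat.log 2 m + 2 := by
          rw [show 4 * m + 2 = 2 * (2 * m + 1) by ring,
            log2_double _ (by omega), log2_odd _ hm1]
        have hih := ih (2 * m) (by omega)
        rw [if_neg (by omega : 2 * m ≠ 0), hte, log2_double _ hm1] at hih
        rw [if_neg (by omega : 4 * m + 2 ≠ 0), hQ2 m, htn, hlog]
        have h1 := htr m
        omega
    · -- n = 4m + 3
      have htn : t (4 * m + 3) = 1 - t (2 * m + 1) := by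
        rw [show 4 * m + 3 = 2 * (2 * m + 1) + 1 by ring, hto]
      have htn2 : t (2 * m + 1) = 1 - t m := hto m
      rcases Nat.eq_zero_or_pos m with rfl | hm1
      · norm_num [hQ3 0, hQ0, htn, htn2, ht0, show Nat.log 2 3 = 1 from by have := log2_odd 1 le_rfl; simpa using this]
      · have hlog : Nat.log 2 (4 * m + 3) = Nat.log 2 m + 2 := by
          rw [show 4 * m + 3 = 2 * (2 * m + 1) + 1 by ring,
            log2_odd _ (by omega), log2_odd _ hm1]
        have hih := ih (2 * m) (by omega)
        rw [if_neg (by omega : 2 * m ≠ 0), hte, log2_double _ hm1] at hih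
        rw [if_neg (by omega : 4 * m + 3 ≠ 0), hQ3 m, htn, htn2, hlog]
        have h1 := htr m
        have h2 := hQr (2 * m)
        omega
end

section
/- The sequence M₁ defined by M₁(0) = 0, M₁(1) = 1, M₁(4n) = M₁(n), M₁(4n+1) = 1 - M₁(n), M₁(4n+2) = M₁(2n + 1 - M₁(n)), M₁(4n+3) = 1 - M₁(2n + 1 - M₁(n)) is well-defined (each right-hand side refers to strictly smaller indices for arguments 4n+r ≥ 2), and M₁ is balanced: M₁(2n) + M₁(2n+1) = 1 for all n ≥ 0. -/
/-- The defining recurrences of the sequence `M₁` (values in `{0,1}`):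
`M₁(0)=0`, `M₁(1)=1`, `M₁(4n)=M₁(n)`, `M₁(4n+1)=1-M₁(n)` (for indices `≥ 2`),
`M₁(4n+2)=M₁(2n+1-M₁(n))`, `M₁(4n+3)=1-M₁(2n+1-M₁(n))`. -/
def IsM1 (M : ℕ → ℕ) : Prop :=
  (∀ n, M n ≤ 1) ∧ M 0 = 0 ∧ M 1 = 1 ∧
    (∀ n, 1 ≤ n → M (4 * n) = M n) ∧
    (∀ n, 1 ≤ n → M (4 * n + 1) = 1 - M n) ∧
    (∀ n, M (4 * n + 2) = M (2 * n + 1 - M n)) ∧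
    (∀ n, M (4 * n + 3) = 1 - M (2 * n + 1 - M n))

/-- The explicit construction of the sequence. -/
def Mdef : ℕ → ℕ
  | 0 => 0
  | 1 => 1
  | (n+2) =>
    if (n+2) % 4 = 0 then Mdef ((n+2) / 4)
    else if (n+2) % 4 = 1 then 1 - Mdef ((n+2) / 4)
    else if (n+2) % 4 = 2 then Mdef (2 * ((n+2)/4) + 1 - Mdef ((n+2)/4))
    else 1 - Mdef (2 * ((n+2)/4) + 1 - Mdef ((n+2)/4))
decreasing_by all_goals omega

lemma Mdef_eq (n : ℕ) (h : 2 ≤ n) :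
    Mdef n =
      if n % 4 = 0 then Mdef (n / 4)
      else if n % 4 = 1 then 1 - Mdef (n / 4)
      else if n % 4 = 2 then Mdef (2 * (n/4) + 1 - Mdef (n/4))
      else 1 - Mdef (2 * (n/4) + 1 - Mdef (n/4)) := by
  obtain ⟨m, rfl⟩ : ∃ m, n = m + 2 := ⟨n - 2, by omega⟩
  rw [Mdef]

lemma Mdef_le_one : ∀ n, Mdef n ≤ 1 := by
  intro n
  induction n using Nat.strong_induction_on with
  | _ n ih =>
    match n, ih with
    | 0, _ => simp [Mdef]
    | 1, _ => simp [Mdef]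
    | (m+2), ih =>
      rw [Mdef_eq (m+2) (by omega)]
      have h1 : (m+2)/4 < m+2 := by omega
      have h2 : 2 * ((m+2)/4) + 1 - Mdef ((m+2)/4) < m + 2 := by omega
      split_ifs with h3 h4 h5
      · exact ih _ h1
      · omega
      · exact ih _ h2
      · omega

lemma Mdef_four (n : ℕ) (h : 1 ≤ n) : Mdef (4 * n) = Mdef n := by
  rw [Mdef_eq (4 * n) (by omega)]
  have h1 : (4 * n) % 4 = 0 := by omega
  have h2 : (4 * n) / 4 = n := by omega
  simp [h1, h2]

lemma Mdef_four1 (n : ℕ) (h : 1 ≤ n) : Mdef (4 * n + 1) = 1 - Mdef n := by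
  rw [Mdef_eq (4 * n + 1) (by omega)]
  have h1 : (4 * n + 1) % 4 = 1 := by omega
  have h2 : (4 * n + 1) / 4 = n := by omega
  simp [h1, h2]

lemma Mdef_four2 (n : ℕ) : Mdef (4 * n + 2) = Mdef (2 * n + 1 - Mdef n) := by
  rw [Mdef_eq (4 * n + 2) (by omega)]
  have h1 : (4 * n + 2) % 4 = 2 := by omega
  have h2 : (4 * n + 2) / 4 = n := by omega
  simp [h1, h2]

lemma Mdef_four3 (n : ℕ) : Mdef (4 * n + 3) = 1 - Mdef (2 * n + 1 - Mdef n) := by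
  rw [Mdef_eq (4 * n + 3) (by omega)]
  have h1 : (4 * n + 3) % 4 = 3 := by omega
  have h2 : (4 * n + 3) / 4 = n := by omega
  simp [h1, h2]

lemma isM1_Mdef : IsM1 Mdef :=
  ⟨Mdef_le_one, by simp [Mdef], by simp [Mdef], Mdef_four, Mdef_four1, Mdef_four2, Mdef_four3⟩

lemma isM1_unique (M : ℕ → ℕ) (hM : IsM1 M) : M = Mdef := by
  obtain ⟨hle, h0, h1, h4, h41, h42, h43⟩ := hM
  funext n
  induction n using Nat.strong_induction_on with
  | _ n ih =>
    match n, ih with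
    | 0, _ => simpa [Mdef] using h0
    | 1, _ => simpa [Mdef] using h1
    | (m+2), ih =>
      set n := m + 2 with hn
      obtain ⟨q, r, hr, hqr⟩ : ∃ q r, r < 4 ∧ n = 4 * q + r := ⟨n / 4, n % 4, by omega, by omega⟩
      have hq : q < n := by omega
      have hMq : M q = Mdef q := ih q hq
      interval_cases r
      · have hq1 : 1 ≤ q := by omega
        rw [hqr]; simp only [Nat.add_zero]
        rw [h4 q hq1, Mdef_four q hq1, hMq]
      · have hq1 : 1 ≤ q := by omega
        rw [hqr, h41 q hq1, Mdef_four1 q hq1, hMq]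
      · have harg : 2 * q + 1 - Mdef q < n := by omega
        rw [hqr, h42 q, Mdef_four2 q, hMq, ih _ harg]
      · have harg : 2 * q + 1 - Mdef q < n := by omega
        rw [hqr, h43 q, Mdef_four3 q, hMq, ih _ harg]

/-- `M₁` is well-defined (there is exactly one sequence satisfying the
recurrences) and every such sequence is balanced: `M₁(2n) + M₁(2n+1) = 1`. -/
theorem M1_wellDefined_balanced :
    (∃! M : ℕ → ℕ, IsM1 M) ∧
      ∀ M : ℕ → ℕ, IsM1 M → ∀ n, M (2 * n) + M (2 * n + 1) = 1 := by
  constructor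
  · exact ⟨Mdef, isM1_Mdef, fun M hM => isM1_unique M hM⟩
  · rintro M ⟨hle, h0, h1, h4, h41, h42, h43⟩ n
    rcases Nat.even_or_odd n with ⟨k, hk⟩ | ⟨k, hk⟩
    · rcases Nat.eq_zero_or_pos k with rfl | hk1
      · subst hk; simpa [h0] using h1
      · subst hk
        have e1 : 2 * (k + k) = 4 * k := by ring
        have e2 : 2 * (k + k) + 1 = 4 * k + 1 := by ring
        rw [e1, show 4 * k + 1 = 4 * k + 1 from rfl, h4 k hk1, h41 k hk1]
        have := hle k; omega
    · subst hk
      have e1 : 2 * (2 * k + 1) = 4 * k + 2 := by ring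
      have e2 : 2 * (2 * k + 1) + 1 = 4 * k + 3 := by ring
      rw [e1, show 4 * k + 2 + 1 = 4 * k + 3 from rfl, h42 k, h43 k]
      have := hle (2 * k + 1 - M k); omega
end

section
/- The sequence M₁ satisfies the fixed-argument (linearized) recurrence M₁(4n+2) = M₁(2n+1) XOR M₁(n) for all n ≥ 0. -/
/-- `M₁` satisfies the linearized recurrence
`M₁(4n+2) = M₁(2n+1) XOR M₁(n)` for all `n ≥ 0`. -/
theorem M1_linearized (M : ℕ → ℕ) (hM : IsM1 M) :
    ∀ n, M (4 * n + 2) = (M (2 * n + 1) + M n) % 2 := by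
  obtain ⟨hle, h0, h1, h4, h5, h6, h7⟩ := hM
  have hodd : ∀ n, M (2 * n + 1) = 1 - M (2 * n) := by
    intro n
    rcases Nat.even_or_odd n with ⟨k, hk⟩ | ⟨k, hk⟩
    · subst hk
      rcases Nat.eq_zero_or_pos k with rfl | hkpos
      · simpa [h0] using h1
      · have e1 : 2 * (k + k) + 1 = 4 * k + 1 := by ring
        have e2 : 2 * (k + k) = 4 * k := by ring
        rw [e1, e2, h5 k hkpos, h4 k hkpos]
    · subst hk
      have e1 : 2 * (2 * k + 1) + 1 = 4 * k + 3 := by ring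
      have e2 : 2 * (2 * k + 1) = 4 * k + 2 := by ring
      rw [e1, e2, h7 k, h6 k]
  intro n
  have hn := hle n
  have h2n := hle (2 * n)
  interval_cases hMn : M n
  · rw [h6 n, hMn]
    have : (M (2 * n + 1) + 0) % 2 = M (2 * n + 1) := by
      have := hle (2 * n + 1); omega
    rw [this]; norm_num
  · rw [h6 n, hMn, hodd n]
    have e : 2 * n + 1 - 1 = 2 * n := by omega
    rw [e]
    omega
end

section
/- Define b(n) = M₁(2n + 1 - M₁(n)) and the lifted state s(n) = (M₁(n), b(n)) ∈ 𝔽₂². Then for all n ≥ 0, writing s(n) = (x, y): s(4n) = (x, y), s(4n+1) = (1 ⊕ x, x ⊕ y), s(4n+2) = (y, 1 ⊕ x), and s(4n+3) = (1 ⊕ y, x ⊕ y ⊕ 1). -/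
/-- with `b(n) = M₁(2n+1-M₁(n))` and lifted state `s(n) = (M₁(n), b(n))`,
writing `s(n) = (x, y)`, we have `s(4n) = (x, y)`, `s(4n+1) = (1⊕x, x⊕y)`,
`s(4n+2) = (y, 1⊕x)`, `s(4n+3) = (1⊕y, x⊕y⊕1)`. -/
theorem M1_state_closure (M : ℕ → ℕ) (hM : IsM1 M)
    (b : ℕ → ℕ) (hb : ∀ n, b n = M (2 * n + 1 - M n)) :
    ∀ n, (M (4 * n) = M n ∧ b (4 * n) = b n) ∧
      (M (4 * n + 1) = (1 + M n) % 2 ∧ b (4 * n + 1) = (M n + b n) % 2) ∧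
      (M (4 * n + 2) = b n ∧ b (4 * n + 2) = (1 + M n) % 2) ∧
      (M (4 * n + 3) = (1 + b n) % 2 ∧ b (4 * n + 3) = (M n + b n + 1) % 2) := by
  obtain ⟨hle, h0, h1, h40, h41, h42, h43⟩ := hM
  -- key parity lemma: M (2m+1) = 1 - M (2m) for m ≥ 1
  have key : ∀ m, 1 ≤ m → M (2 * m + 1) = 1 - M (2 * m) := by
    intro m hm
    rcases Nat.even_or_odd m with ⟨j, hj⟩ | ⟨j, hj⟩
    · subst hj
      have e1 : M (4 * j + 1) = 1 - M j := h41 j (by omega)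
      have e0 : M (4 * j) = M j := h40 j (by omega)
      rw [show 2 * (j + j) + 1 = 4 * j + 1 from by ring,
          show 2 * (j + j) = 4 * j from by ring]
      have := hle j
      omega
    · subst hj
      have e2 := h42 j
      have e3 := h43 j
      have := hle (2 * j + 1 - M j)
      rw [show 2 * (2 * j + 1) + 1 = 4 * j + 3 from by ring,
          show 2 * (2 * j + 1) = 4 * j + 2 from by ring]
      omega
  intro n
  rcases Nat.eq_zero_or_pos n with rfl | hn
  · -- n = 0 : compute everything explicitly
    have m2 : M 2 = 1 := by
      have h := h42 0
      rw [h0] at h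
      norm_num [h1] at h
      exact h
    have m3 : M 3 = 0 := by
      have h := h43 0
      rw [h0] at h
      norm_num [h1] at h
      exact h
    have m4 : M 4 = 1 := by
      have h := h40 1 le_rfl
      norm_num [h1] at h
      exact h
    have m7 : M 7 = 0 := by
      have h := h43 1
      rw [h1] at h
      norm_num [m2] at h
      exact h
    have b0 : b 0 = 1 := by rw [hb]; norm_num [h0, h1]
    have b1 : b 1 = 1 := by rw [hb]; norm_num [h1, m2]
    have b2 : b 2 = 1 := by rw [hb]; norm_num [m2, m4]
    have b3 : b 3 = 0 := by rw [hb]; norm_num [m3, m7]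
    norm_num [h0, h1, m2, m3, b0, b1, b2, b3]
  · -- n ≥ 1
    have hbn := hb n
    have hxle := hle n
    have hyle : b n ≤ 1 := by rw [hbn]; exact hle _
    have hk := key n hn
    have hule := hle (2 * n)
    have hA : M n = 0 → M (2 * n + 1) = b n := by
      intro h; rw [hbn, h]; norm_num
    have hB : M n = 1 → M (2 * n) = b n := by
      intro h; rw [hbn, h]; norm_num
    have hx : M n = 0 ∨ M n = 1 := by omega
    have hy : b n = 0 ∨ b n = 1 := by omega
    rcases hx with hx | hx <;> rcases hy with hy | hy
    · -- x = 0, y = 0 : u = 1, v = 0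
      have hv : M (2 * n + 1) = 0 := by rw [hA hx, hy]
      have hu : M (2 * n) = 1 := by omega
      have A1 : M (4 * n) = 0 := by rw [h40 n hn, hx]
      have A2 : b (4 * n) = 0 := by
        rw [hb, A1, show 2 * (4 * n) + 1 - 0 = 4 * (2 * n) + 1 from by omega,
            h41 (2 * n) (by omega)]
        omega
      have A3 : M (4 * n + 1) = 1 := by rw [h41 n hn, hx]
      have A4 : b (4 * n + 1) = 0 := by
        rw [hb, A3, show 2 * (4 * n + 1) + 1 - 1 = 4 * (2 * n) + 2 from by omega,
            h42 (2 * n), hu, show 2 * (2 * n) + 1 - 1 = 4 * n from by omega]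
        exact A1
      have A5 : M (4 * n + 2) = 0 := by
        rw [h42 n, hx, show 2 * n + 1 - 0 = 2 * n + 1 from rfl, hv]
      have A6 : b (4 * n + 2) = 1 := by
        rw [hb, A5, show 2 * (4 * n + 2) + 1 - 0 = 4 * (2 * n + 1) + 1 from by omega,
            h41 (2 * n + 1) (by omega)]
        omega
      have A7 : M (4 * n + 3) = 1 := by
        rw [h43 n, hx, show 2 * n + 1 - 0 = 2 * n + 1 from rfl, hv]
      have A8 : b (4 * n + 3) = 1 := by
        rw [hb, A7, show 2 * (4 * n + 3) + 1 - 1 = 4 * (2 * n + 1) + 2 from by omega,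
            h42 (2 * n + 1), hv, show 2 * (2 * n + 1) + 1 - 0 = 4 * n + 3 from by omega]
        exact A7
      omega
    · -- x = 0, y = 1 : u = 0, v = 1
      have hv : M (2 * n + 1) = 1 := by rw [hA hx, hy]
      have hu : M (2 * n) = 0 := by omega
      have A1 : M (4 * n) = 0 := by rw [h40 n hn, hx]
      have A2 : b (4 * n) = 1 := by
        rw [hb, A1, show 2 * (4 * n) + 1 - 0 = 4 * (2 * n) + 1 from by omega,
            h41 (2 * n) (by omega)]
        omega
      have A3 : M (4 * n + 1) = 1 := by rw [h41 n hn, hx]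
      have A4 : b (4 * n + 1) = 1 := by
        rw [hb, A3, show 2 * (4 * n + 1) + 1 - 1 = 4 * (2 * n) + 2 from by omega,
            h42 (2 * n), hu, show 2 * (2 * n) + 1 - 0 = 4 * n + 1 from by omega]
        exact A3
      have A5 : M (4 * n + 2) = 1 := by
        rw [h42 n, hx, show 2 * n + 1 - 0 = 2 * n + 1 from rfl, hv]
      have A6 : b (4 * n + 2) = 1 := by
        rw [hb, A5, show 2 * (4 * n + 2) + 1 - 1 = 4 * (2 * n + 1) from by omega,
            h40 (2 * n + 1) (by omega)]
        exact hv
      have A7 : M (4 * n + 3) = 0 := by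
        rw [h43 n, hx, show 2 * n + 1 - 0 = 2 * n + 1 from rfl, hv]
      have A8 : b (4 * n + 3) = 0 := by
        rw [hb, A7, show 2 * (4 * n + 3) + 1 - 0 = 4 * (2 * n + 1) + 3 from by omega,
            h43 (2 * n + 1), hv, show 2 * (2 * n + 1) + 1 - 1 = 4 * n + 2 from by omega]
        omega
      omega
    · -- x = 1, y = 0 : u = 0, v = 1
      have hu : M (2 * n) = 0 := by rw [hB hx, hy]
      have hv : M (2 * n + 1) = 1 := by omega
      have A1 : M (4 * n) = 1 := by rw [h40 n hn, hx]
      have A2 : b (4 * n) = 0 := by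
        rw [hb, A1, show 2 * (4 * n) + 1 - 1 = 4 * (2 * n) from by omega,
            h40 (2 * n) (by omega)]
        exact hu
      have A3 : M (4 * n + 1) = 0 := by rw [h41 n hn, hx]
      have A4 : b (4 * n + 1) = 1 := by
        rw [hb, A3, show 2 * (4 * n + 1) + 1 - 0 = 4 * (2 * n) + 3 from by omega,
            h43 (2 * n), hu, show 2 * (2 * n) + 1 - 0 = 4 * n + 1 from by omega]
        omega
      have A5 : M (4 * n + 2) = 0 := by
        rw [h42 n, hx, show 2 * n + 1 - 1 = 2 * n from by omega, hu]
      have A6 : b (4 * n + 2) = 0 := by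
        rw [hb, A5, show 2 * (4 * n + 2) + 1 - 0 = 4 * (2 * n + 1) + 1 from by omega,
            h41 (2 * n + 1) (by omega)]
        omega
      have A7 : M (4 * n + 3) = 1 := by
        rw [h43 n, hx, show 2 * n + 1 - 1 = 2 * n from by omega, hu]
      have A8 : b (4 * n + 3) = 0 := by
        rw [hb, A7, show 2 * (4 * n + 3) + 1 - 1 = 4 * (2 * n + 1) + 2 from by omega,
            h42 (2 * n + 1), hv, show 2 * (2 * n + 1) + 1 - 1 = 4 * n + 2 from by omega]
        exact A5
      omega
    · -- x = 1, y = 1 : u = 1, v = 0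
      have hu : M (2 * n) = 1 := by rw [hB hx, hy]
      have hv : M (2 * n + 1) = 0 := by omega
      have A1 : M (4 * n) = 1 := by rw [h40 n hn, hx]
      have A2 : b (4 * n) = 1 := by
        rw [hb, A1, show 2 * (4 * n) + 1 - 1 = 4 * (2 * n) from by omega,
            h40 (2 * n) (by omega)]
        exact hu
      have A3 : M (4 * n + 1) = 0 := by rw [h41 n hn, hx]
      have A4 : b (4 * n + 1) = 0 := by
        rw [hb, A3, show 2 * (4 * n + 1) + 1 - 0 = 4 * (2 * n) + 3 from by omega,
            h43 (2 * n), hu, show 2 * (2 * n) + 1 - 1 = 4 * n from by omega]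
        omega
      have A5 : M (4 * n + 2) = 1 := by
        rw [h42 n, hx, show 2 * n + 1 - 1 = 2 * n from by omega, hu]
      have A6 : b (4 * n + 2) = 0 := by
        rw [hb, A5, show 2 * (4 * n + 2) + 1 - 1 = 4 * (2 * n + 1) from by omega,
            h40 (2 * n + 1) (by omega)]
        exact hv
      have A7 : M (4 * n + 3) = 0 := by
        rw [h43 n, hx, show 2 * n + 1 - 1 = 2 * n from by omega, hu]
      have A8 : b (4 * n + 3) = 1 := by
        rw [hb, A7, show 2 * (4 * n + 3) + 1 - 0 = 4 * (2 * n + 1) + 3 from by omega,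
            h43 (2 * n + 1), hv, show 2 * (2 * n + 1) + 1 - 0 = 4 * n + 3 from by omega]
        omega
      omega
end

section
/- The sequence M₂ defined by M₂(0) = 0, M₂(1) = 1, M₂(4n) = M₂(2n + M₂(n)), M₂(4n+1) = 1 - M₂(4n), M₂(4n+2) = M₂(2n + 1 - M₂(n)), M₂(4n+3) = 1 - M₂(4n+2) is well-defined (the selector indices satisfy 2n + M₂(n) < 4n and 2n + 1 - M₂(n) < 4n+2 when those recurrences are used) and balanced: M₂(2n) + M₂(2n+1) = 1 for all n ≥ 0. -/
def M2aux (n : ℕ) : ℕ :=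
  if h0 : n = 0 then 0
  else if h1 : n = 1 then 1
  else
    if n % 4 = 0 then M2aux (2 * (n / 4) + min 1 (M2aux (n / 4)))
    else if n % 4 = 1 then 1 - M2aux (2 * (n / 4) + min 1 (M2aux (n / 4)))
    else if n % 4 = 2 then M2aux (2 * (n / 4) + 1 - min 1 (M2aux (n / 4)))
    else 1 - M2aux (2 * (n / 4) + 1 - min 1 (M2aux (n / 4)))
decreasing_by
  all_goals (simp_wf; omega)

lemma M2aux_le (n : ℕ) : M2aux n ≤ 1 := by
  induction n using Nat.strong_induction_on with
  | _ n ih =>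
    rw [M2aux]
    split_ifs with h0 h1 h2 h3 h4
    · omega
    · omega
    · exact ih _ (by have := Nat.min_le_left 1 (M2aux (n / 4)); omega)
    · omega
    · exact ih _ (by have := Nat.min_le_left 1 (M2aux (n / 4)); omega)
    · omega

lemma M2aux_zero : M2aux 0 = 0 := by rw [M2aux]; norm_num
lemma M2aux_one : M2aux 1 = 1 := by rw [M2aux]; norm_num

lemma min_eq (n : ℕ) : min 1 (M2aux n) = M2aux n :=
  min_eq_right (M2aux_le n)

lemma M2aux_four (n : ℕ) (h : 1 ≤ n) : M2aux (4 * n) = M2aux (2 * n + M2aux n) := by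
  conv_lhs => rw [M2aux]
  have e1 : 4 * n / 4 = n := by omega
  have e2 : 4 * n % 4 = 0 := by omega
  rw [dif_neg (by omega : ¬ 4 * n = 0), dif_neg (by omega : ¬ 4 * n = 1)]
  simp only [e1, e2]
  norm_num [min_eq]

lemma M2aux_four1 (n : ℕ) (h : 1 ≤ n) : M2aux (4 * n + 1) = 1 - M2aux (4 * n) := by
  conv_lhs => rw [M2aux]
  have e1 : (4 * n + 1) / 4 = n := by omega
  have e2 : (4 * n + 1) % 4 = 1 := by omega
  rw [dif_neg (by omega : ¬ 4 * n + 1 = 0), dif_neg (by omega : ¬ 4 * n + 1 = 1)]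
  simp only [e1, e2]
  norm_num [min_eq, M2aux_four n h]

lemma M2aux_four2 (n : ℕ) : M2aux (4 * n + 2) = M2aux (2 * n + 1 - M2aux n) := by
  conv_lhs => rw [M2aux]
  have e1 : (4 * n + 2) / 4 = n := by omega
  have e2 : (4 * n + 2) % 4 = 2 := by omega
  rw [dif_neg (by omega : ¬ 4 * n + 2 = 0), dif_neg (by omega : ¬ 4 * n + 2 = 1)]
  simp only [e1, e2]
  norm_num [min_eq]

lemma M2aux_four3 (n : ℕ) : M2aux (4 * n + 3) = 1 - M2aux (4 * n + 2) := by
  conv_lhs => rw [M2aux]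
  have e1 : (4 * n + 3) / 4 = n := by omega
  have e2 : (4 * n + 3) % 4 = 3 := by omega
  rw [dif_neg (by omega : ¬ 4 * n + 3 = 0), dif_neg (by omega : ¬ 4 * n + 3 = 1)]
  simp only [e1, e2]
  norm_num [min_eq, M2aux_four2 n]

/-- The defining recurrences of the sequence `M₂` (values in `{0,1}`):
`M₂(0)=0`, `M₂(1)=1`, `M₂(4n)=M₂(2n+M₂(n))`, `M₂(4n+1)=1-M₂(4n)` (for indices `≥ 2`),
`M₂(4n+2)=M₂(2n+1-M₂(n))`, `M₂(4n+3)=1-M₂(4n+2)`. -/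
def IsM2 (M : ℕ → ℕ) : Prop :=
  (∀ n, M n ≤ 1) ∧ M 0 = 0 ∧ M 1 = 1 ∧
    (∀ n, 1 ≤ n → M (4 * n) = M (2 * n + M n)) ∧
    (∀ n, 1 ≤ n → M (4 * n + 1) = 1 - M (4 * n)) ∧
    (∀ n, M (4 * n + 2) = M (2 * n + 1 - M n)) ∧
    (∀ n, M (4 * n + 3) = 1 - M (4 * n + 2))

lemma isM2_M2aux : IsM2 M2aux :=
  ⟨M2aux_le, M2aux_zero, M2aux_one, M2aux_four, M2aux_four1, M2aux_four2, M2aux_four3⟩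

lemma isM2_unique {M M' : ℕ → ℕ} (hM : IsM2 M) (hM' : IsM2 M') : M = M' := by
  obtain ⟨le, a0, a1, b0, b1, b2, b3⟩ := hM
  obtain ⟨le', a0', a1', b0', b1', b2', b3'⟩ := hM'
  funext n
  induction n using Nat.strong_induction_on with
  | _ n ih =>
    rcases Nat.lt_or_ge n 2 with h | h
    · interval_cases n
      · rw [a0, a0']
      · rw [a1, a1']
    · set k := n / 4 with hk
      have hmod : n % 4 = 0 ∨ n % 4 = 1 ∨ n % 4 = 2 ∨ n % 4 = 3 := by omega
      rcases hmod with hm | hm | hm | hm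
      · have hn : n = 4 * k := by omega
        have hk1 : 1 ≤ k := by omega
        have ek : M k = M' k := ih k (by omega)
        rw [hn, b0 k hk1, b0' k hk1, ek]
        exact ih _ (by have := le' k; omega)
      · have hn : n = 4 * k + 1 := by omega
        have hk1 : 1 ≤ k := by omega
        rw [hn, b1 k hk1, b1' k hk1, ih (4 * k) (by omega)]
      · have hn : n = 4 * k + 2 := by omega
        have ek : M k = M' k := ih k (by omega)
        rw [hn, b2 k, b2' k, ek]
        exact ih _ (by omega)
      · have hn : n = 4 * k + 3 := by omega
        rw [hn, b3 k, b3' k, ih (4 * k + 2) (by omega)]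

/-- `M₂` is well-defined — the selector indices satisfy
`2n + M₂(n) < 4n` (for `n ≥ 1`) and `2n + 1 - M₂(n) < 4n + 2`, and there is exactly one
sequence satisfying the recurrences — and every such sequence is balanced. -/
theorem M2_wellDefined_balanced :
    (∀ M : ℕ → ℕ, IsM2 M →
      (∀ n, 1 ≤ n → 2 * n + M n < 4 * n) ∧ (∀ n, 2 * n + 1 - M n < 4 * n + 2)) ∧
    (∃! M : ℕ → ℕ, IsM2 M) ∧
      ∀ M : ℕ → ℕ, IsM2 M → ∀ n, M (2 * n) + M (2 * n + 1) = 1 := by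
  refine ⟨?_, ⟨M2aux, isM2_M2aux, fun M hM => isM2_unique hM isM2_M2aux⟩, ?_⟩
  · intro M hM
    obtain ⟨le, _⟩ := hM
    exact ⟨fun n hn => by have := le n; omega, fun n => by have := le n; omega⟩
  · intro M hM n
    obtain ⟨le, a0, a1, b0, b1, b2, b3⟩ := hM
    rcases Nat.even_or_odd n with ⟨k, hk⟩ | ⟨k, hk⟩
    · rcases Nat.eq_zero_or_pos k with rfl | hpos
      · have e2 : 2 * n + 1 = 1 := by omega
        have e1 : 2 * n = 0 := by omega
        rw [e2, e1, a0, a1]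
      · have e2 : 2 * n + 1 = 4 * k + 1 := by omega
        have e1 : 2 * n = 4 * k := by omega
        rw [e2, e1, b1 k hpos]
        have := le (4 * k); omega
    · have e2 : 2 * n + 1 = 4 * k + 3 := by omega
      have e1 : 2 * n = 4 * k + 2 := by omega
      rw [e2, e1, b3 k]
      have := le (4 * k + 2); omega
end

section
/- Define the lifted state s(n) = (M₂(n), M₂(2n + M₂(n))) ∈ 𝔽₂². If s(n) = (x, y), then M₂(2n) = x ⊕ y and M₂(2n+1) = x ⊕ y ⊕ 1. -/
/-- with lifted state `s(n) = (M₂(n), M₂(2n+M₂(n))) = (x, y)`,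
we have `M₂(2n) = x ⊕ y` and `M₂(2n+1) = x ⊕ y ⊕ 1`. -/
theorem M2_recover (M : ℕ → ℕ) (hM : IsM2 M) :
    ∀ n, M (2 * n) = (M n + M (2 * n + M n)) % 2 ∧
      M (2 * n + 1) = (M n + M (2 * n + M n) + 1) % 2 := by
  obtain ⟨hle, h0, h1, h4, h5, h6, h7⟩ := hM
  have key : ∀ n, M (2 * n + 1) = 1 - M (2 * n) := by
    intro n
    rcases Nat.even_or_odd n with ⟨m, hm⟩ | ⟨m, hm⟩
    · subst hm
      rcases Nat.eq_zero_or_pos m with rfl | hp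
      · simpa [h0] using h1
      · have h := h5 m hp
        have e1 : 2 * (m + m) = 4 * m := by ring
        rw [e1]; exact h
    · subst hm
      have h := h7 m
      have e1 : 2 * (2 * m + 1) = 4 * m + 2 := by ring
      rw [e1]; exact h
  intro n
  have ha := hle n
  have hb := hle (2 * n)
  have hc := hle (2 * n + 1)
  have hk := key n
  rcases Nat.le_one_iff_eq_zero_or_eq_one.mp ha with h | h <;> rw [h] <;>
    (try simp only [add_zero]) <;> constructor <;> omega
end

section
/- The sequence M₂ satisfies the fixed-argument recurrences M₂(4n) = M₂(2n) XOR M₂(n) and M₂(4n+2) = M₂(2n+1) XOR M₂(n) for all n ≥ 0. -/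
lemma M2_odd (M : ℕ → ℕ) (hM : IsM2 M) :
    ∀ n, 1 ≤ n → M (2 * n + 1) = 1 - M (2 * n) := by
  obtain ⟨hle, h0, h1, h4, h41, h42, h43⟩ := hM
  intro n hn
  rcases Nat.even_or_odd n with ⟨m, hm⟩ | ⟨m, hm⟩
  · subst hm
    have hm1 : 1 ≤ m := by omega
    have := h41 m hm1
    have e1 : 2 * (m + m) + 1 = 4 * m + 1 := by ring
    have e2 : 2 * (m + m) = 4 * m := by ring
    rw [e1, e2]; exact this
  · subst hm
    have := h43 m
    have e1 : 2 * (2 * m + 1) + 1 = 4 * m + 3 := by ring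
    have e2 : 2 * (2 * m + 1) = 4 * m + 2 := by ring
    rw [e1, e2]; exact this

/-- `M₂` satisfies the fixed-argument recurrences
`M₂(4n) = M₂(2n) XOR M₂(n)` and `M₂(4n+2) = M₂(2n+1) XOR M₂(n)` for all `n ≥ 0`. -/
theorem M2_linearized (M : ℕ → ℕ) (hM : IsM2 M) :
    ∀ n, M (4 * n) = (M (2 * n) + M n) % 2 ∧
      M (4 * n + 2) = (M (2 * n + 1) + M n) % 2 := by
  intro n
  have hodd := M2_odd M hM
  obtain ⟨hle, h0, h1, h4, h41, h42, h43⟩ := hM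
  rcases Nat.eq_zero_or_pos n with rfl | hn
  · refine ⟨by simp [h0], ?_⟩
    have := h42 0
    simp [h0, h1] at this ⊢
    omega
  · have hMn := hle n
    have hM2n := hle (2 * n)
    have hM2n1 := hle (2 * n + 1)
    have ho := hodd n hn
    constructor
    · have := h4 n hn
      interval_cases hmn : M n
      · rw [this]; simp; omega
      · rw [this, ho]; omega
    · have := h42 n
      interval_cases hmn : M n
      · rw [this]; simp; omega
      · rw [this]
        have e : 2 * n + 1 - 1 = 2 * n := by omega
        rw [e, ho]; omega
end

section
/- Write n in base 4 as n = Σ_{k≥0} d_k 4^k with digits d_k ∈ {0,1,2,3}, and write d_k = 2 j_k + i_k with i_k, j_k ∈ {0,1}. Then M₂(n) equals the XOR over k ≡ 0 (mod 3) of (i_k ⊕ j_k), XORed with the XOR over k ≡ 1 (mod 3) of j_k, XORed with the XOR over k ≡ 2 (mod 3) of i_k. -/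
/-- The `k`-th base-4 digit of `n`. -/
def dig4 (n k : ℕ) : ℕ := n / 4 ^ k % 4

/-!
In binary, `n = Σ b_t 2^t`, the base-4 digit `d_k` has `i_k = b_{2k}` and `j_k = b_{2k+1}`, so the
claimed formula says that `M₂(n)` is the parity of the bits `b_t` with `t ≢ 2 (mod 3)`. Call this
`P₀(n)`, and more generally let `P_c(n)` be the parity of the bits `b_t` with `c + t ≢ 2 (mod 3)`.
Each bit is counted in exactly two of `P_c, P_{c+1}, P_{c+2}`, so `P_{c+2} = P_c ⊕ P_{c+1}`; together
with `P_c(2m + b) = [c ≢ 2] b ⊕ P_{c+1}(m)` this gives `P₀(4n + 2a + b) = a ⊕ b ⊕ P₀(n) ⊕ P₁(n)`,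
from which the recurrences of `M₂` follow at once. They determine `M₂` by strong induction.
-/

namespace IsM2

theorem unique {M M' : ℕ → ℕ} (hM : IsM2 M) (hM' : IsM2 M') : M = M' := by
  obtain ⟨-, h0, h1, h4, h41, h42, h43⟩ := hM
  obtain ⟨hle', h0', h1', h4', h41', h42', h43'⟩ := hM'
  funext n
  induction n using Nat.strong_induction_on with
  | _ n ih =>
    rcases Nat.eq_zero_or_pos n with rfl | hn
    · rw [h0, h0']
    obtain ⟨q, r, hr, rfl⟩ : ∃ q r, r < 4 ∧ n = 4 * q + r :=
      ⟨n / 4, n % 4, Nat.mod_lt _ (by norm_num), (Nat.div_add_mod n 4).symm⟩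
    have hq : M q = M' q := ih q (by omega)
    have := hle' q
    interval_cases r
    · rw [Nat.add_zero, h4 q (by omega), h4' q (by omega), hq, ih _ (by omega)]
    · rcases Nat.eq_zero_or_pos q with rfl | hq0
      · rw [h1, h1']
      · rw [h41 q hq0, h41' q hq0, ih (4 * q) (by omega)]
    · rw [h42, h42', hq, ih _ (by omega)]
    · rw [h43, h43', ih (4 * q + 2) (by omega)]

end IsM2

def phaseWeight (c : ℕ) : ℕ := if c % 3 = 2 then 0 else 1

/-- The parity of the binary digits `b_t` of `n` with `c + t ≢ 2 (mod 3)`. -/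
def bitParity (c n : ℕ) : ℕ :=
  if n = 0 then 0 else (phaseWeight c * (n % 2) + bitParity (c + 1) (n / 2)) % 2
termination_by n
decreasing_by omega

theorem bitParity_eq (c n : ℕ) :
    bitParity c n = (phaseWeight c * (n % 2) + bitParity (c + 1) (n / 2)) % 2 := by
  rw [bitParity]
  split_ifs with hn
  · simp [hn, bitParity]
  · rfl

theorem bitParity_lt_two (c n : ℕ) : bitParity c n < 2 := by
  rw [bitParity_eq]
  exact Nat.mod_lt _ (by norm_num)

theorem bitParity_two_mul_add {b : ℕ} (c m : ℕ) (hb : b < 2) :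
    bitParity c (2 * m + b) = (phaseWeight c * b + bitParity (c + 1) m) % 2 := by
  rw [bitParity_eq, show (2 * m + b) % 2 = b by omega, show (2 * m + b) / 2 = m by omega]

theorem bitParity_add_two (c n : ℕ) :
    bitParity (c + 2) n = (bitParity c n + bitParity (c + 1) n) % 2 := by
  induction n using Nat.strong_induction_on generalizing c with
  | _ n ih =>
    rcases Nat.eq_zero_or_pos n with rfl | hn
    · simp [bitParity]
    have h2 := bitParity_eq (c + 2) n
    have h0 := bitParity_eq c n
    have h1 := bitParity_eq (c + 1) n
    have h3 := ih (n / 2) (by omega) (c + 1)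
    have := bitParity_lt_two (c + 1) (n / 2)
    have := bitParity_lt_two (c + 2) (n / 2)
    simp only [phaseWeight, add_assoc, Nat.reduceAdd] at h0 h1 h2 h3
    split_ifs at h0 h1 h2 <;> omega

theorem bitParity_four_mul_add {r : ℕ} (c n : ℕ) (hr : r < 4) :
    bitParity c (4 * n + r) =
      (phaseWeight c * (r % 2) + phaseWeight (c + 1) * (r / 2) + bitParity (c + 2) n) % 2 := by
  rw [show 4 * n + r = 2 * (2 * n + r / 2) + r % 2 by omega,
    bitParity_two_mul_add c _ (Nat.mod_lt r two_pos), bitParity_two_mul_add (c + 1) n (by omega),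
    Nat.add_mod_mod, ← add_assoc]

theorem bitParity_zero_four_mul_add {r : ℕ} (n : ℕ) (hr : r < 4) :
    bitParity 0 (4 * n + r) = (r % 2 + r / 2 + bitParity 0 n + bitParity 1 n) % 2 := by
  rw [bitParity_four_mul_add 0 n hr, bitParity_add_two, Nat.add_mod_mod]
  norm_num [phaseWeight]
  omega

theorem bitParity_zero_two_mul_add {b : ℕ} (n : ℕ) (hb : b < 2) :
    bitParity 0 (2 * n + b) = (b + bitParity 1 n) % 2 := by
  simpa [phaseWeight] using bitParity_two_mul_add 0 n hb

theorem isM2_bitParity : IsM2 (bitParity 0) := by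
  have hP := bitParity_lt_two 0
  have hP1 : bitParity 0 1 = 1 := by
    simpa [bitParity] using bitParity_zero_two_mul_add 0 (b := 1) one_lt_two
  refine ⟨fun n => Nat.le_of_lt_succ (hP n), by simp [bitParity], hP1, fun n _ => ?_,
    fun n _ => ?_, fun n => ?_, fun n => ?_⟩
  all_goals
    have := hP n
    have h0 := bitParity_zero_four_mul_add n (r := 0) (by norm_num)
    have h1 := bitParity_zero_four_mul_add n (r := 1) (by norm_num)
    have h2 := bitParity_zero_four_mul_add n (r := 2) (by norm_num)
    have h3 := bitParity_zero_four_mul_add n (r := 3) (by norm_num)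
    have hb := bitParity_zero_two_mul_add n (hP n)
    have hb' : bitParity 0 (2 * n + 1 - bitParity 0 n) = (1 - bitParity 0 n + bitParity 1 n) % 2 := by
      rw [Nat.add_sub_assoc (by omega)]
      exact bitParity_zero_two_mul_add n (by omega)
    rw [Nat.add_zero] at h0
    omega

theorem dig4_zero (n : ℕ) : dig4 n 0 = n % 4 := by
  simp [dig4]

theorem dig4_succ (n k : ℕ) : dig4 n (k + 1) = dig4 (n / 4) k := by
  rw [dig4, dig4, Nat.div_div_eq_div_mul, pow_succ']

def digitWeight (k d : ℕ) : ℕ :=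
  if k % 3 = 0 then d % 2 + d / 2 else if k % 3 = 1 then d / 2 else d % 2

theorem digitWeight_eq (k d : ℕ) :
    digitWeight k d = phaseWeight (2 * k) * (d % 2) + phaseWeight (2 * k + 1) * (d / 2) := by
  simp only [digitWeight, phaseWeight]
  split_ifs <;> omega

theorem bitParity_two_mul_eq_sum_digitWeight {m n : ℕ} (c : ℕ) (hn : n < 4 ^ m) :
    bitParity (2 * c) n = (∑ k ∈ Finset.range m, digitWeight (c + k) (dig4 n k)) % 2 := by
  induction m generalizing c n with
  | zero =>
    obtain rfl : n = 0 := by simpa using hn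
    simp [bitParity]
  | succ m ih =>
    have hq : n / 4 < 4 ^ m := by rw [pow_succ] at hn; omega
    conv_lhs => rw [← Nat.div_add_mod n 4]
    rw [bitParity_four_mul_add _ _ (Nat.mod_lt n (by norm_num)), show 2 * c + 2 = 2 * (c + 1) by ring,
      ih (c + 1) hq, Finset.sum_range_succ', Nat.add_mod_mod, dig4_zero, add_zero, digitWeight_eq]
    simp only [dig4_succ, add_comm, add_left_comm]

/-- writing `n = Σ d_k 4^k` with `d_k = 2 j_k + i_k`, `i_k, j_k ∈ {0,1}`,
we have `M₂(n) = ⨁_{k ≡ 0 (3)} (i_k ⊕ j_k) ⊕ ⨁_{k ≡ 1 (3)} j_k ⊕ ⨁_{k ≡ 2 (3)} i_k`.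
(The sum over `k < n + 1` includes all nonzero digits, and taking the sum mod 2 computes
the iterated XOR.) -/
theorem M2_digit_formula (M : ℕ → ℕ) (hM : IsM2 M) :
    ∀ n, M n =
      (∑ k ∈ Finset.range (n + 1),
        (if k % 3 = 0 then dig4 n k % 2 + dig4 n k / 2
         else if k % 3 = 1 then dig4 n k / 2
         else dig4 n k % 2)) % 2 := by
  intro n
  have hn : n < 4 ^ (n + 1) :=
    (Nat.lt_pow_self (by norm_num)).trans (Nat.pow_lt_pow_succ (by norm_num))
  rw [hM.unique isM2_bitParity]
  have h := bitParity_two_mul_eq_sum_digitWeight 0 hn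
  simp only [mul_zero, zero_add] at h
  exact h
end
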